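/- In ℤ[x,y,z], with b, c, d₃ as above and d₃' = y⁸z^{2m−2} − 4x^m y⁵z^{3m−2} + x^{4m−1}y⁴z^{m−1} + 6x^{2m}y²z^{4m−2} − 4x^{5m−1}yz^{2m−1} + x^{8m−2} − xz^{7m−3}, the identity x d₃ + y b c² + z d₃' = 0 holds for every integer m ≥ 1. -/

import Mathlib

open MvPolynomial

noncomputable def px : MvPolynomial (Fin 3) ℤ := X 0
noncomputable def py : MvPolynomial (Fin 3) ℤ := X 1
noncomputable def pz : MvPolynomial (Fin 3) ℤ := X 2

noncomputable def pb (m : ℕ) : MvPolynomial (Fin 3) ℤ :=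
  px ^ (3 * m - 1) - py * pz ^ (2 * m - 1)

noncomputable def pc (m : ℕ) : MvPolynomial (Fin 3) ℤ :=
  py ^ 3 - px ^ m * pz ^ m

noncomputable def pd3 (m : ℕ) : MvPolynomial (Fin 3) ℤ :=
  - px ^ (3 * m - 2) * py ^ 7 + 2 * px ^ (m - 1) * py ^ 5 * pz ^ (3 * m - 1)
    + px ^ (4 * m - 2) * py ^ 4 * pz ^ m - 5 * px ^ (2 * m - 1) * py ^ 2 * pz ^ (4 * m - 1)
    + 3 * px ^ (5 * m - 2) * py * pz ^ (2 * m) - px ^ (8 * m - 3) * pz + pz ^ (7 * m - 2)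

noncomputable def pd3' (m : ℕ) : MvPolynomial (Fin 3) ℤ :=
  py ^ 8 * pz ^ (2 * m - 2) - 4 * px ^ m * py ^ 5 * pz ^ (3 * m - 2)
    + px ^ (4 * m - 1) * py ^ 4 * pz ^ (m - 1) + 6 * px ^ (2 * m) * py ^ 2 * pz ^ (4 * m - 2)
    - 4 * px ^ (5 * m - 1) * py * pz ^ (2 * m - 1) + px ^ (8 * m - 2) - px * pz ^ (7 * m - 3)

/-! Writing `m = k + 1` removes every truncated subtraction from the exponents, after which the
identity is an equality of polynomials in `x`, `y`, `z`, `xᵏ`, `zᵏ` that ring normalization checks. -/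

/-- In `ℤ[x,y,z]`, `x d₃ + y b c² + z d₃' = 0` for every `m ≥ 1`. -/
theorem stmt6 (m : ℕ) (hm : 1 ≤ m) :
    px * pd3 m + py * pb m * (pc m) ^ 2 + pz * pd3' m = 0 := by
  obtain ⟨k, rfl⟩ := Nat.exists_eq_add_of_le' hm
  simp only [pb, pc, pd3, pd3', Nat.mul_succ, Nat.reduceSubDiff]
  ring
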